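/- arXiv:2202.11871 — 5 statements merged into one kernel-verified Lean document; each statement's English description precedes it below -/
import Mathlib

section
/- Let n ≥ 1 and let φ : ℝⁿ → ℝⁿ be a continuous map satisfying ⟨x, φ(x)⟩ = 0 for every x ∈ ℝⁿ. If x : ℝ → ℝⁿ is differentiable, satisfies xᵢ'(t) = xᵢ(t)·(1 − ‖x(t)‖²) + φᵢ(x(t)) for every i and t, and ‖x(0)‖ = 1, then ‖x(t)‖ = 1 for all t ≥ 0; that is, the unit sphere is forward invariant for the extended system. -/
/-!
Tangency kills ⟪x, φ x⟫, so r = ‖x‖² obeys the scalar equation r' = 2r(1 - r). Hence u = r - 1 solves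
the linear equation u' = -2r·u, whose solutions are u(0)·exp(∫₀ᵗ -2r); as u(0) = 0, r ≡ 1.
-/

open Real intervalIntegral

theorem hasDerivAt_euclidean {𝕜 ι : Type*} [RCLike 𝕜] [Fintype ι]
    {f : 𝕜 → EuclideanSpace 𝕜 ι} {f' : EuclideanSpace 𝕜 ι} {t : 𝕜} :
    HasDerivAt f f' t ↔ ∀ i, HasDerivAt (fun s => f s i) (f' i) t := by
  simp only [hasDerivAt_iff_hasFDerivAt, ← hasFDerivWithinAt_univ, hasFDerivWithinAt_euclidean]
  rfl

theorem eq_mul_exp_integral_of_hasDerivAt {u a : ℝ → ℝ} (ha : Continuous a)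
    (hu : ∀ t, HasDerivAt u (a t * u t) t) (t : ℝ) :
    u t = u 0 * exp (∫ s in (0 : ℝ)..t, a s) := by
  set A : ℝ → ℝ := fun t => ∫ s in (0 : ℝ)..t, a s
  have hA : ∀ t, HasDerivAt A (a t) t := fun t =>
    (ha.integral_hasStrictDerivAt 0 t).hasDerivAt
  have hw : ∀ s, HasDerivAt (fun s => u s * exp (-A s)) 0 s := fun s =>
    ((hu s).fun_mul (hA s).fun_neg.exp).congr_deriv (by ring)
  have hconst := is_const_of_deriv_eq_zero (fun s => (hw s).differentiableAt)
    (fun s => (hw s).deriv) t 0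
  simp only [A, integral_same, neg_zero, exp_zero, mul_one] at hconst
  rw [← hconst, mul_assoc, ← exp_add, neg_add_cancel, exp_zero, mul_one]

open scoped RealInnerProductSpace in
theorem norm_eq_one_of_hasDerivAt_sphereExtension {F : Type*} [NormedAddCommGroup F]
    [InnerProductSpace ℝ F] {φ : F → F} (hφ : ∀ z, ⟪z, φ z⟫ = 0) {x : ℝ → F}
    (hx : ∀ t, HasDerivAt x ((1 - ‖x t‖ ^ 2) • x t + φ (x t)) t) (h0 : ‖x 0‖ = 1) (t : ℝ) :
    ‖x t‖ = 1 := by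
  set r : ℝ → ℝ := fun t => ‖x t‖ ^ 2
  have hr : ∀ t, HasDerivAt r (2 * r t * (1 - r t)) t := fun t => by
    refine (hx t).norm_sq.congr_deriv ?_
    rw [inner_add_right, inner_smul_right, real_inner_self_eq_norm_sq, hφ]
    ring
  have hu : ∀ t, HasDerivAt (fun s => r s - 1) (-2 * r t * (r t - 1)) t := fun t =>
    ((hr t).sub_const 1).congr_deriv (by ring)
  have hrcont : Continuous r := continuous_iff_continuousAt.2 fun t => (hr t).continuousAt
  have h := eq_mul_exp_integral_of_hasDerivAt (continuous_const.mul hrcont) hu t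
  simp only [r, h0, one_pow, sub_self, zero_mul] at h
  exact (pow_eq_one_iff_of_nonneg (norm_nonneg _) two_ne_zero).1 (by linarith)

theorem stmt_1_general (n : ℕ)
    (φ : EuclideanSpace ℝ (Fin n) → EuclideanSpace ℝ (Fin n))
    (hφtan : ∀ z : EuclideanSpace ℝ (Fin n), (inner ℝ z (φ z) : ℝ) = 0)
    (x : ℝ → EuclideanSpace ℝ (Fin n))
    (hxode : ∀ (i : Fin n) (t : ℝ),
      HasDerivAt (fun s => x s i) (x t i * (1 - ‖x t‖ ^ 2) + φ (x t) i) t)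
    (hx0 : ‖x 0‖ = 1) :
    ∀ t : ℝ, 0 ≤ t → ‖x t‖ = 1 := by
  intro t _
  refine norm_eq_one_of_hasDerivAt_sphereExtension hφtan
    (fun s => hasDerivAt_euclidean.2 fun i => ?_) hx0 t
  simpa [mul_comm] using hxode i s

/-- the unit sphere is forward invariant for the sphere-extended system
xᵢ' = xᵢ(1 − ‖x‖²) + φᵢ(x) when φ is continuous and tangent (⟨x, φ(x)⟩ = 0). -/
theorem stmt_1 (n : ℕ) (hn : 1 ≤ n)
    (φ : EuclideanSpace ℝ (Fin n) → EuclideanSpace ℝ (Fin n))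
    (hφcont : Continuous φ)
    (hφtan : ∀ z : EuclideanSpace ℝ (Fin n), (inner ℝ z (φ z) : ℝ) = 0)
    (x : ℝ → EuclideanSpace ℝ (Fin n))
    (hxdiff : Differentiable ℝ x)
    (hxode : ∀ (i : Fin n) (t : ℝ),
      HasDerivAt (fun s => x s i) (x t i * (1 - ‖x t‖ ^ 2) + φ (x t) i) t)
    (hx0 : ‖x 0‖ = 1) :
    ∀ t : ℝ, 0 ≤ t → ‖x t‖ = 1 :=
  stmt_1_general n φ hφtan x hxode hx0
end

section
/- Let n ≥ 1 and let φ : ℝⁿ → ℝⁿ be a continuous map satisfying ⟨x, φ(x)⟩ = 0 for every x ∈ ℝⁿ. If x : [0,∞) → ℝⁿ is differentiable, satisfies xᵢ'(t) = xᵢ(t)·(1 − ‖x(t)‖²) + φᵢ(x(t)) for every i and t, and x(0) ≠ 0, then ‖x(t)‖² → 1 as t → ∞; that is, the unit sphere is globally attracting for the extended system on ℝⁿ \ {0}. -/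
/-!
Since `φ` is tangent to the spheres, `r = ‖x‖²` satisfies the logistic equation `r' = 2r(1 - r)`
exactly. Along any solution of `r' = k r (1 - r)` the quantity `r(t) (r₀ + (1 - r₀) e^{-kt}) - r₀`
solves a linear homogeneous equation and vanishes at `0`, hence vanishes identically by Grönwall;
so `r(t) = r₀ / (r₀ + (1 - r₀) e^{-kt}) → 1` as soon as `r₀ ≠ 0`.
-/

open Real Set Filter Topology

theorem hasDerivWithinAt_piLp {𝕜 ι : Type*} [NontriviallyNormedField 𝕜] [Fintype ι]
    {p : ENNReal} [Fact (1 ≤ p)] {E : ι → Type*} [∀ i, NormedAddCommGroup (E i)]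
    [∀ i, NormedSpace 𝕜 (E i)] {f : 𝕜 → PiLp p E} {f' : PiLp p E} {s : Set 𝕜} {t : 𝕜} :
    HasDerivWithinAt f f' s t ↔ ∀ i, HasDerivWithinAt (fun u => f u i) (f' i) s t := by
  simp only [hasDerivWithinAt_iff_hasFDerivWithinAt, hasFDerivWithinAt_piLp]
  rfl

theorem hasDerivWithinAt_norm_sq_of_inner_self_eq_zero {E : Type*} [NormedAddCommGroup E]
    [InnerProductSpace ℝ E] {φ : E → E} (hφ : ∀ z, inner ℝ z (φ z) = 0) {x : ℝ → E}
    {s : Set ℝ} {t : ℝ} (hx : HasDerivWithinAt x ((1 - ‖x t‖ ^ 2) • x t + φ (x t)) s t) :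
    HasDerivWithinAt (fun u => ‖x u‖ ^ 2) (2 * ‖x t‖ ^ 2 * (1 - ‖x t‖ ^ 2)) s t := by
  convert hx.norm_sq using 1
  rw [inner_add_right, hφ, inner_smul_right, real_inner_self_eq_norm_sq]
  ring

theorem eq_zero_of_hasDerivWithinAt_eq_smul_self {E : Type*} [NormedAddCommGroup E]
    [NormedSpace ℝ E] {f : ℝ → E} {c : ℝ → ℝ} {a : ℝ} (hc : ContinuousOn c (Ici a))
    (hf : ∀ t ≥ a, HasDerivWithinAt f (c t • f t) (Ici a) t) (ha : f a = 0) :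
    ∀ t ≥ a, f t = 0 := by
  intro T hT
  obtain ⟨K, hK⟩ :=
    isCompact_Icc.exists_bound_of_continuousOn (hc.mono (Icc_subset_Ici_self : Icc a T ⊆ Ici a))
  have hf_cont : ContinuousOn f (Icc a T) := fun t ht =>
    ((hf t ht.1).continuousWithinAt).mono Icc_subset_Ici_self
  refine eq_zero_of_abs_deriv_le_mul_abs_self_of_eq_zero_right (K := K) hf_cont
    (fun t ht => (hf t ht.1).mono (Ici_subset_Ici.2 ht.1)) ha (fun t ht => ?_) T ⟨hT, le_rfl⟩
  rw [norm_smul]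
  exact mul_le_mul_of_nonneg_right (hK t (Ico_subset_Icc_self ht)) (norm_nonneg _)

section Logistic

variable {k : ℝ} {r : ℝ → ℝ}

theorem mul_denom_eq_of_logistic
    (hr : ∀ t ≥ 0, HasDerivWithinAt r (k * r t * (1 - r t)) (Ici 0) t) :
    ∀ t ≥ 0, r t * (r 0 + (1 - r 0) * exp (-(k * t))) = r 0 := by
  -- `G = r D - r 0` solves `G' = -k r G`.
  set D : ℝ → ℝ := fun t => r 0 + (1 - r 0) * exp (-(k * t))
  have hD : ∀ t, HasDerivAt D (-k * (D t - r 0)) t := by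
    intro t
    have hexp : HasDerivAt (fun u => -(k * u)) (-k) t := by
      simpa using (hasDerivAt_id t).const_mul (-k)
    refine ((hexp.exp.const_mul (1 - r 0)).const_add (r 0)).congr_deriv ?_
    simp only [D]
    ring
  have hG := eq_zero_of_hasDerivWithinAt_eq_smul_self (f := fun t => r t * D t - r 0)
    (c := fun t => -k * r t)
    (fun t ht => (hr t ht).continuousWithinAt.const_mul (-k))
    (fun t ht => by
      convert ((hr t ht).fun_mul (hD t).hasDerivWithinAt).sub_const (r 0) using 1
      rw [smul_eq_mul]
      ring)
    (by simp [D])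
  intro t ht
  exact sub_eq_zero.1 (hG t ht)

theorem tendsto_one_of_logistic (hk : 0 < k) (hr₀ : r 0 ≠ 0)
    (hr : ∀ t ≥ 0, HasDerivWithinAt r (k * r t * (1 - r t)) (Ici 0) t) :
    Tendsto r atTop (𝓝 1) := by
  have hD : Tendsto (fun t => r 0 + (1 - r 0) * exp (-(k * t))) atTop (𝓝 (r 0)) := by
    have := tendsto_exp_neg_atTop_nhds_zero.comp (tendsto_id.const_mul_atTop hk)
    simpa using (this.const_mul (1 - r 0)).const_add (r 0)
  have hlim := (tendsto_const_nhds (x := r 0)).div hD hr₀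
  rw [div_self hr₀] at hlim
  refine hlim.congr' ?_
  filter_upwards [eventually_ge_atTop 0, hD.eventually_ne hr₀] with t ht hDt
  rw [Pi.div_apply, div_eq_iff hDt, mul_denom_eq_of_logistic hr t ht]

end Logistic

theorem stmt_3_general (n : ℕ)
    (φ : EuclideanSpace ℝ (Fin n) → EuclideanSpace ℝ (Fin n))
    (hφtan : ∀ z : EuclideanSpace ℝ (Fin n), (inner ℝ z (φ z) : ℝ) = 0)
    (x : ℝ → EuclideanSpace ℝ (Fin n))
    (hxode : ∀ (i : Fin n) (t : ℝ), 0 ≤ t →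
      HasDerivWithinAt (fun s => x s i) (x t i * (1 - ‖x t‖ ^ 2) + φ (x t) i)
        (Set.Ici (0 : ℝ)) t)
    (hx0 : x 0 ≠ 0) :
    Filter.Tendsto (fun t => ‖x t‖ ^ 2) Filter.atTop (nhds 1) := by
  have hx : ∀ t ≥ 0, HasDerivWithinAt x ((1 - ‖x t‖ ^ 2) • x t + φ (x t)) (Ici 0) t := by
    intro t ht
    refine hasDerivWithinAt_piLp.2 fun i => ?_
    simpa [mul_comm] using hxode i t ht
  refine tendsto_one_of_logistic two_pos (by simpa using hx0) fun t ht => ?_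
  exact hasDerivWithinAt_norm_sq_of_inner_self_eq_zero hφtan (hx t ht)

/-- the unit sphere is globally attracting on ℝⁿ \ {0} for the
sphere-extended system xᵢ' = xᵢ(1 − ‖x‖²) + φᵢ(x): if x(0) ≠ 0 then ‖x(t)‖² → 1. -/
theorem stmt_3 (n : ℕ) (hn : 1 ≤ n)
    (φ : EuclideanSpace ℝ (Fin n) → EuclideanSpace ℝ (Fin n))
    (hφcont : Continuous φ)
    (hφtan : ∀ z : EuclideanSpace ℝ (Fin n), (inner ℝ z (φ z) : ℝ) = 0)
    (x : ℝ → EuclideanSpace ℝ (Fin n))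
    (hxdiff : DifferentiableOn ℝ x (Set.Ici (0 : ℝ)))
    (hxode : ∀ (i : Fin n) (t : ℝ), 0 ≤ t →
      HasDerivWithinAt (fun s => x s i) (x t i * (1 - ‖x t‖ ^ 2) + φ (x t) i)
        (Set.Ici (0 : ℝ)) t)
    (hx0 : x 0 ≠ 0) :
    Filter.Tendsto (fun t => ‖x t‖ ^ 2) Filter.atTop (nhds 1) :=
  stmt_3_general n φ hφtan x hxode hx0
end

section
/- Let n ≥ 1, let φ : ℝⁿ → ℝⁿ be locally Lipschitz with |φᵢ(x)| ≤ B for every i and every x ∈ ℝⁿ, and let σ > 0 satisfy σ³ − σ > B. Define the vector field Y on ℝⁿ by Yᵢ(y) = (yᵢ − σ)·(1 − ‖y − σ𝟙‖²) + φᵢ(y − σ𝟙), where 𝟙 is the all-ones vector. If y : [0,∞) → ℝⁿ is differentiable with y'(t) = Y(y(t)) for all t ≥ 0 and yᵢ(0) > 0 for every i, then yᵢ(t) > 0 for every i and every t ≥ 0; that is, the open positive orthant ℝⁿ₊₊ is forward invariant for Y. -/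
/-!
On the face `yᵢ = 0` the translated point `y - σ𝟙` has `i`-th coordinate `-σ`, hence norm at
least `σ`, so the `i`-th component of the field is at least `σ³ - σ - B > 0` there, whatever the
other coordinates are. Each coordinate is therefore a scalar function with positive derivative at
each of its zeros, and such a function cannot reach `0` from above: at a first zero `T` it has a
minimum on `[0, T]`, which forces its derivative there to be `≤ 0`.
-/

def allOnes (n : ℕ) : EuclideanSpace ℝ (Fin n) := WithLp.toLp 2 (fun _ => 1)

open Set

theorem IsMinOn.hasDerivWithinAt_Icc_right_nonpos {f : ℝ → ℝ} {a b d : ℝ} (hab : a < b)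
    (hmin : IsMinOn f (Icc a b) b) (hf : HasDerivWithinAt f d (Icc a b) b) : d ≤ 0 := by
  have hcone : a - b ∈ posTangentConeAt (Icc a b) b :=
    sub_mem_posTangentConeAt_of_segment_subset (by rw [segment_symm, segment_eq_Icc hab.le])
  have h := hmin.localize.hasFDerivWithinAt_nonneg hf hcone
  simp only [ContinuousLinearMap.toSpanSingleton_apply, smul_eq_mul] at h
  nlinarith

theorem exists_first_zero_of_continuousOn_Ici {g : ℝ → ℝ} {a t₀ : ℝ}
    (hg : ContinuousOn g (Ici a)) (ha : 0 < g a) (ht₀ : a ≤ t₀) (hgt₀ : g t₀ ≤ 0) :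
    ∃ T, a < T ∧ g T = 0 ∧ ∀ s ∈ Ico a T, 0 < g s := by
  have hS : IsClosed (Ici a ∩ g ⁻¹' Iic 0) :=
    hg.preimage_isClosed_of_isClosed isClosed_Ici isClosed_Iic
  obtain ⟨T, ⟨hTa, hgT⟩, hTmin⟩ : ∃ T, IsLeast (Ici a ∩ g ⁻¹' Iic 0) T :=
    ⟨_, hS.isLeast_csInf ⟨t₀, ht₀, hgt₀⟩ ⟨a, fun t ht => ht.1⟩⟩
  have hpos : ∀ s ∈ Ico a T, 0 < g s := by
    intro s hs
    by_contra! hgs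
    exact (hs.2.trans_le (hTmin ⟨hs.1, hgs⟩)).false
  have hlt : a < T := hTa.lt_of_ne (by rintro rfl; exact hgT.not_gt ha)
  refine ⟨T, hlt, hgT.antisymm (not_lt.mp fun hneg => ?_), hpos⟩
  obtain ⟨s, hs, hgs⟩ :=
    intermediate_value_Ioo' hlt.le (hg.mono Icc_subset_Ici_self) ⟨hneg, ha⟩
  exact (hpos s (Ioo_subset_Ico_self hs)).ne' hgs

theorem forall_pos_of_hasDerivWithinAt_pos_of_eq_zero {g g' : ℝ → ℝ} {a : ℝ}
    (hg : ∀ t ∈ Ici a, HasDerivWithinAt g (g' t) (Ici a) t) (ha : 0 < g a)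
    (hzero : ∀ t ∈ Ici a, g t = 0 → 0 < g' t) : ∀ t ∈ Ici a, 0 < g t := by
  intro t₀ ht₀
  by_contra! hgt₀
  obtain ⟨T, haT, hgT, hpos⟩ := exists_first_zero_of_continuousOn_Ici
    (fun t ht => (hg t ht).continuousWithinAt) ha ht₀ hgt₀
  have hmin : IsMinOn g (Icc a T) T := isMinOn_iff.mpr fun s hs => by
    rcases hs.2.lt_or_eq with hsT | rfl
    · simpa [hgT] using (hpos s ⟨hs.1, hsT⟩).le
    · exact le_rfl
  have hderiv := (hg T haT.le).mono (Icc_subset_Ici_self : Icc a T ⊆ Ici a)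
  exact (hmin.hasDerivWithinAt_Icc_right_nonpos haT hderiv).not_gt (hzero T haT.le hgT)

theorem apply_mul_one_sub_norm_sq_add_pos {n : ℕ} {σ c B : ℝ} (hσ : 0 < σ)
    (hσB : B < σ ^ 3 - σ) (hc : |c| ≤ B) {v : EuclideanSpace ℝ (Fin n)} {i : Fin n}
    (hvi : v i = -σ) : 0 < v i * (1 - ‖v‖ ^ 2) + c := by
  have hσv : σ ≤ ‖v‖ := by simpa [hvi, abs_of_pos hσ] using PiLp.norm_apply_le v i
  have hσv2 : σ ^ 2 ≤ ‖v‖ ^ 2 := pow_le_pow_left₀ hσ.le hσv 2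
  rw [hvi]
  nlinarith [neg_abs_le c, mul_le_mul_of_nonneg_left hσv2 hσ.le]

theorem stmt_5_general (n : ℕ) (B : ℝ)
    (φ : EuclideanSpace ℝ (Fin n) → EuclideanSpace ℝ (Fin n))
    (hφbdd : ∀ (z : EuclideanSpace ℝ (Fin n)) (i : Fin n), |φ z i| ≤ B)
    (σ : ℝ) (hσ : 0 < σ) (hσB : B < σ ^ 3 - σ)
    (Y : EuclideanSpace ℝ (Fin n) → EuclideanSpace ℝ (Fin n))
    (hY : ∀ (z : EuclideanSpace ℝ (Fin n)) (i : Fin n),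
      Y z i = (z i - σ) * (1 - ‖z - σ • allOnes n‖ ^ 2) + φ (z - σ • allOnes n) i)
    (y : ℝ → EuclideanSpace ℝ (Fin n))
    (hyode : ∀ t : ℝ, 0 ≤ t → HasDerivWithinAt y (Y (y t)) (Set.Ici (0 : ℝ)) t)
    (hy0 : ∀ i : Fin n, 0 < y 0 i) :
    ∀ t : ℝ, 0 ≤ t → ∀ i : Fin n, 0 < y t i := by
  intro t ht i
  have hcoord : ∀ s ∈ Ici (0 : ℝ), HasDerivWithinAt (fun s => y s i) (Y (y s) i) (Ici 0) s :=
    fun s hs => (EuclideanSpace.proj (𝕜 := ℝ) i).hasFDerivAt.comp_hasDerivWithinAt s (hyode s hs)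
  refine forall_pos_of_hasDerivWithinAt_pos_of_eq_zero hcoord (hy0 i) (fun s _ hys => ?_) t ht
  have hvi : (y s - σ • allOnes n) i = -σ := by simp [allOnes, hys]
  rw [hY, hys, zero_sub, ← hvi]
  exact apply_mul_one_sub_norm_sq_add_pos hσ hσB (hφbdd _ i) hvi

/-- the open positive orthant is forward invariant for the translated
sphere-extended field Yᵢ(y) = (yᵢ − σ)(1 − ‖y − σ𝟙‖²) + φᵢ(y − σ𝟙), when φ is locally
Lipschitz, coordinatewise bounded by B, and σ³ − σ > B. -/
theorem stmt_5 (n : ℕ) (hn : 1 ≤ n) (B : ℝ)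
    (φ : EuclideanSpace ℝ (Fin n) → EuclideanSpace ℝ (Fin n))
    (hφlip : LocallyLipschitz φ)
    (hφbdd : ∀ (z : EuclideanSpace ℝ (Fin n)) (i : Fin n), |φ z i| ≤ B)
    (σ : ℝ) (hσ : 0 < σ) (hσB : B < σ ^ 3 - σ)
    (Y : EuclideanSpace ℝ (Fin n) → EuclideanSpace ℝ (Fin n))
    (hY : ∀ (z : EuclideanSpace ℝ (Fin n)) (i : Fin n),
      Y z i = (z i - σ) * (1 - ‖z - σ • allOnes n‖ ^ 2) + φ (z - σ • allOnes n) i)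
    (y : ℝ → EuclideanSpace ℝ (Fin n))
    (hyode : ∀ t : ℝ, 0 ≤ t → HasDerivWithinAt y (Y (y t)) (Set.Ici (0 : ℝ)) t)
    (hy0 : ∀ i : Fin n, 0 < y 0 i) :
    ∀ t : ℝ, 0 ≤ t → ∀ i : Fin n, 0 < y t i :=
  stmt_5_general n B φ hφbdd σ hσ hσB Y hY y hyode hy0
end

section
/- Let n ≥ 1, let η ≥ 0, and let u, v ∈ ℝⁿ satisfy |uᵢ − vᵢ| ≤ η for every i. Define the logit map δ : ℝⁿ → ℝⁿ by δᵢ(y) = e^{yᵢ} / Σⱼ e^{yⱼ}. Then for every i, |δᵢ(u) − δᵢ(v)| ≤ 1 − e^{−2η}; that is, ‖δ(u) − δ(v)‖_∞ ≤ 1 − e^{−2η}. -/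
/-! Shifting every coordinate of `y` by at most `η` changes the numerator `e^{yᵢ}` and the
denominator `Σⱼ e^{yⱼ}` of `δᵢ(y)` each by a factor in `[e^{-η}, e^{η}]`, so `δᵢ(v) ≥ e^{-2η} δᵢ(u)`
and symmetrically. Two numbers in `[0, 1]` each at least `e^{-2η}` times the other differ by at most
`1 - e^{-2η}`. -/

open Real

/-- The logit map δᵢ(y) = e^{yᵢ} / Σⱼ e^{yⱼ}. -/
noncomputable def logitMap (n : ℕ) (y : Fin n → ℝ) : Fin n → ℝ :=
  fun i => Real.exp (y i) / ∑ j, Real.exp (y j)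

lemma abs_sub_le_one_sub_of_mul_le {a b c : ℝ} (ha : a ≤ 1) (hb : b ≤ 1) (hc : c ≤ 1)
    (hab : c * a ≤ b) (hba : c * b ≤ a) : |a - b| ≤ 1 - c := by
  rw [abs_le]
  constructor <;> nlinarith

namespace logitMap

variable {n : ℕ}

lemma sum_exp_pos (y : Fin n → ℝ) (i : Fin n) : 0 < ∑ j, exp (y j) :=
  Finset.sum_pos (fun j _ => exp_pos (y j)) ⟨i, Finset.mem_univ i⟩

lemma apply_le_one (y : Fin n → ℝ) (i : Fin n) : logitMap n y i ≤ 1 :=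
  (div_le_one (sum_exp_pos y i)).mpr
    (Finset.single_le_sum (fun j _ => (exp_pos (y j)).le) (Finset.mem_univ i))

lemma exp_neg_two_mul_mul_apply_le {η : ℝ} {u v : Fin n → ℝ} (huv : ∀ j, |u j - v j| ≤ η)
    (i : Fin n) : exp (-(2 * η)) * logitMap n u i ≤ logitMap n v i := by
  have hnum : exp (-η) * exp (u i) ≤ exp (v i) := by
    rw [← exp_add, exp_le_exp]
    linarith [(abs_le.mp (huv i)).2]
  have hden : ∑ j, exp (v j) ≤ exp η * ∑ j, exp (u j) := by
    rw [Finset.mul_sum]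
    refine Finset.sum_le_sum fun j _ => ?_
    rw [← exp_add, exp_le_exp]
    linarith [(abs_le.mp (huv j)).1]
  calc exp (-(2 * η)) * logitMap n u i
      = exp (-η) * exp (u i) / (exp η * ∑ j, exp (u j)) := by
        rw [logitMap, show -(2 * η) = -η + -η by ring, exp_add, exp_neg η]
        field_simp
    _ ≤ exp (v i) / ∑ j, exp (v j) :=
        div_le_div₀ (exp_pos _).le hnum (sum_exp_pos v i) hden

end logitMap

theorem stmt_8_general (n : ℕ) (η : ℝ)
    (u v : Fin n → ℝ) (huv : ∀ i, |u i - v i| ≤ η) :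
    ∀ i : Fin n, |logitMap n u i - logitMap n v i| ≤ 1 - Real.exp (-(2 * η)) := by
  intro i
  have hη : 0 ≤ η := (abs_nonneg _).trans (huv i)
  have hvu : ∀ j, |v j - u j| ≤ η := fun j => abs_sub_comm (v j) (u j) ▸ huv j
  exact abs_sub_le_one_sub_of_mul_le (logitMap.apply_le_one u i) (logitMap.apply_le_one v i)
    (exp_le_one_iff.mpr (by linarith)) (logitMap.exp_neg_two_mul_mul_apply_le huv i)
    (logitMap.exp_neg_two_mul_mul_apply_le hvu i)

/-- if two payoff vectors differ coordinatewise by at most η, then their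
logit images differ coordinatewise by at most 1 − e^{−2η}. -/
theorem stmt_8 (n : ℕ) (hn : 1 ≤ n) (η : ℝ) (hη : 0 ≤ η)
    (u v : Fin n → ℝ) (huv : ∀ i, |u i - v i| ≤ η) :
    ∀ i : Fin n, |logitMap n u i - logitMap n v i| ≤ 1 - Real.exp (-(2 * η)) :=
  stmt_8_general n η u v huv
end

section
/- Let n ≥ 1, let A be a real n × n matrix, and define the logit map δ : ℝⁿ → ℝⁿ by δᵢ(y) = e^{yᵢ}/Σⱼ e^{yⱼ}. Suppose y : ℝ → ℝⁿ is differentiable and satisfies yᵢ'(t) = (A·δ(y(t)))ᵢ for every i and t. Then x(t) := δ(y(t)) is differentiable and satisfies the replicator equation: for every i and t, xᵢ'(t) = xᵢ(t)·((A·x(t))ᵢ − ⟨x(t), A·x(t)⟩). -/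
theorem hasDerivAt_logitMap_apply {n : ℕ} {y : ℝ → Fin n → ℝ} {v : Fin n → ℝ} {t : ℝ}
    (hy : ∀ j, HasDerivAt (fun s => y s j) (v j) t) (i : Fin n) :
    HasDerivAt (fun s => logitMap n (y s) i)
      (logitMap n (y t) i * (v i - ∑ j, logitMap n (y t) j * v j)) t := by
  have hnum : ∀ j, HasDerivAt (fun s => Real.exp (y s j)) (Real.exp (y t j) * v j) t :=
    fun j => (hy j).exp
  have hden : HasDerivAt (fun s => ∑ j, Real.exp (y s j)) (∑ j, Real.exp (y t j) * v j) t :=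
    HasDerivAt.fun_sum fun j _ => hnum j
  have hS : ∑ j, Real.exp (y t j) ≠ 0 :=
    (Finset.sum_pos (fun j _ => Real.exp_pos _) ⟨i, Finset.mem_univ i⟩).ne'
  refine ((hnum i).fun_div hden hS).congr_deriv ?_
  simp only [logitMap, div_mul_eq_mul_div, ← Finset.sum_div]
  field_simp

theorem stmt_13_general (n : ℕ) (A : Matrix (Fin n) (Fin n) ℝ)
    (y : ℝ → Fin n → ℝ)
    (hyode : ∀ (i : Fin n) (t : ℝ),
      HasDerivAt (fun s => y s i) (A.mulVec (logitMap n (y t)) i) t) :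
    ∀ (i : Fin n) (t : ℝ),
      HasDerivAt (fun s => logitMap n (y s) i)
        (logitMap n (y t) i *
          (A.mulVec (logitMap n (y t)) i -
            ∑ j, logitMap n (y t) j * A.mulVec (logitMap n (y t)) j)) t :=
  fun i t => hasDerivAt_logitMap_apply (fun j => hyode j t) i

/-- if the cumulative payoffs satisfy ẏ = A·δ(y), then x(t) = δ(y(t))
solves the replicator equation ẋᵢ = xᵢ((Ax)ᵢ − ⟨x, Ax⟩). -/
theorem stmt_13 (n : ℕ) (hn : 1 ≤ n) (A : Matrix (Fin n) (Fin n) ℝ)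
    (y : ℝ → Fin n → ℝ) (hydiff : Differentiable ℝ y)
    (hyode : ∀ (i : Fin n) (t : ℝ),
      HasDerivAt (fun s => y s i) (A.mulVec (logitMap n (y t)) i) t) :
    ∀ (i : Fin n) (t : ℝ),
      HasDerivAt (fun s => logitMap n (y s) i)
        (logitMap n (y t) i *
          (A.mulVec (logitMap n (y t)) i -
            ∑ j, logitMap n (y t) j * A.mulVec (logitMap n (y t)) j)) t :=
  stmt_13_general n A y hyode
end
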